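/- arXiv:1306.4827 — 2 statements merged into one kernel-verified Lean document; each statement's English description precedes it below -/
import Mathlib

section
/- Every primitive permutation group G on a finite set Ω synchronizes every map f: Ω→Ω whose kernel has exactly one non-singleton class (kernel type (k,1,…,1) for some k ≥ 2). -/
open Finset

variable {Ω : Type*} [Fintype Ω] [DecidableEq Ω]

/-- The graph associated to a set of transformations: `v ~ w` iff no `f ∈ S` collapses them. -/
def Gr (S : Set (Ω → Ω)) : SimpleGraph Ω where
  Adj v w := v ≠ w ∧ ∀ f ∈ S, f v ≠ f w
  symm := ⟨by rintro v w ⟨h1, h2⟩; exact ⟨h1.symm, fun f hf => (h2 f hf).symm⟩⟩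
  loopless := ⟨by rintro v ⟨h, _⟩; exact h rfl⟩

/-- The rank of a transformation of a finite set: the size of its image. -/
def rank (f : Ω → Ω) : ℕ := (Finset.univ.image f).card

/-- A permutation group is primitive if it is transitive and all blocks are trivial. -/
def IsPrimitive (G : Subgroup (Equiv.Perm Ω)) : Prop :=
  MulAction.IsPretransitive G Ω ∧
    ∀ B : Set Ω, MulAction.IsBlock G B → B.Subsingleton ∨ B = Set.univ

/-- The semigroup generated by a permutation group `G` and a transformation `f`. -/
def genSemigroup (G : Subgroup (Equiv.Perm Ω)) (f : Ω → Ω) : Subsemigroup (Function.End Ω) :=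
  Subsemigroup.closure ((fun g : Equiv.Perm Ω => (g : Ω → Ω)) '' (G : Set (Equiv.Perm Ω)) ∪ {f})

/-- `G` synchronizes `f` if `⟨G, f⟩` contains a constant map. -/
def Synchronizes (G : Subgroup (Equiv.Perm Ω)) (f : Ω → Ω) : Prop :=
  ∃ h ∈ genSemigroup G f, ∃ c : Ω, ∀ x : Ω, h x = c

/-- `f` has kernel type `(k,1,…,1)`: one kernel class of size `k`, all others singletons. -/
def KernelTypeK (f : Ω → Ω) (k : ℕ) : Prop :=
  ∃ A : Finset Ω, A.card = k ∧ (∀ x ∈ A, ∀ y ∈ A, f x = f y) ∧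
    ∀ x y : Ω, f x = f y → x = y ∨ (x ∈ A ∧ y ∈ A)

/-- `f` has kernel type `(3,2,1,…,1)`. -/
def KernelType32 (f : Ω → Ω) : Prop :=
  ∃ A B : Finset Ω, A.card = 3 ∧ B.card = 2 ∧
    (∀ x ∈ A, ∀ y ∈ A, f x = f y) ∧ (∀ x ∈ B, ∀ y ∈ B, f x = f y) ∧
    ∀ x y : Ω, f x = f y → x = y ∨ (x ∈ A ∧ y ∈ A) ∨ (x ∈ B ∧ y ∈ B)

/-!
Suppose `⟨G, f⟩` contains no constant map and let `h` be one of its elements of minimal rank.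
The image of a minimal-rank element is a transversal of the kernel of every other one, so, `G`
being transitive, double counting shows that all kernel classes of a minimal-rank element have
the same size. Applied to `h ∘ g` and `h ∘ g ∘ f`, the class `F` of `h ∘ g` containing
`c = f(A)` has as many points as its preimage under `f`. As `f` is injective off `A`, it maps
the preimage of `Fᶜ` bijectively onto `Fᶜ`, so `F` contains every point `m` missed by `f`.
Hence the class of `c` under the `G`-congruence `x ≡ y ↔ ∀ g, h (g x) = h (g y)` is a block
containing `c ≠ m`, and it is not everything because `h` is not constant.
-/

lemma rank_comp_le (u v : Ω → Ω) : rank (u ∘ v) ≤ rank u := by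
  unfold rank
  rw [← image_image]
  exact card_le_card (image_subset_image (subset_univ _))

section Transitive

variable {G : Type*} [Group G] [Fintype G] [MulAction G Ω] [MulAction.IsPretransitive G Ω]

lemma card_mul_card_filter_smul_eq (x y : Ω) :
    Fintype.card Ω * #{g : G | g • x = y} = Fintype.card G := by
  have hfiber : ∀ y', #{g : G | g • x = y'} = #{g : G | g • x = y} := by
    intro y'
    obtain ⟨g₀, rfl⟩ := MulAction.exists_smul_eq G y y'
    apply card_nbij' (g₀⁻¹ * ·) (g₀ * ·) <;> intro g <;> simp [mul_smul, inv_smul_eq_iff]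
  calc Fintype.card Ω * #{g : G | g • x = y}
      = ∑ y', #{g : G | g • x = y'} := by simp [hfiber]
    _ = Fintype.card G :=
      (card_eq_sum_card_fiberwise (f := fun g : G => g • x) (fun _ _ => mem_univ _)).symm

lemma card_mul_card_filter_smul_mem (x : Ω) (C : Finset Ω) :
    Fintype.card Ω * #{g : G | g • x ∈ C} = #C * Fintype.card G := by
  rw [← sum_card_fiberwise_eq_card_filter, mul_sum]
  simp [card_mul_card_filter_smul_eq]

lemma card_mul_card_eq_of_card_filter_smul_mem_eq_one (X C : Finset Ω)
    (h : ∀ g : G, #{x ∈ X | g • x ∈ C} = 1) : #X * #C = Fintype.card Ω := by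
  have hpairs : ∑ x ∈ X, #{g : G | g • x ∈ C} = Fintype.card G := by
    simpa [bipartiteAbove, bipartiteBelow, h] using
      sum_card_bipartiteAbove_eq_sum_card_bipartiteBelow (s := X) (t := univ)
        (r := fun x (g : G) => g • x ∈ C)
  have : Fintype.card Ω * Fintype.card G = #X * #C * Fintype.card G := by
    calc Fintype.card Ω * Fintype.card G
        = ∑ x ∈ X, Fintype.card Ω * #{g : G | g • x ∈ C} := by rw [← hpairs, mul_sum]
      _ = #X * #C * Fintype.card G := by simp [card_mul_card_filter_smul_mem, mul_assoc]
  exact (Nat.eq_of_mul_eq_mul_right Fintype.card_pos this).symm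

end Transitive

lemma compl_range_subset_of_card_preimage_eq {f : Ω → Ω} {F : Finset Ω}
    (hinj : ∀ x y, f x = f y → f x ∉ F → x = y) (hcard : #{x | f x ∈ F} = #F) :
    (Set.range f)ᶜ ⊆ F := by
  intro y hy
  by_contra hyF
  have hcompl : #{x | f x ∉ F} = #Fᶜ := by
    rw [card_compl, ← hcard, ← card_compl, compl_filter]
  have himage : image f {x | f x ∉ F} = Fᶜ := by
    refine eq_of_subset_of_card_le (fun y hy => ?_) ?_
    · obtain ⟨x, hx, rfl⟩ := mem_image.mp hy
      simpa using hx
    · rw [card_image_of_injOn fun x hx y _ hxy => hinj x y hxy (by simpa using hx), hcompl]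
  obtain ⟨x, -, rfl⟩ := mem_image.mp (himage ▸ mem_compl.mpr hyF)
  exact hy ⟨x, rfl⟩

lemma isBlock_setOf_forall_smul_eq {G X β : Type*} [Group G] [MulAction G X] (φ : X → β)
    (c : X) : MulAction.IsBlock G {y | ∀ g : G, φ (g • y) = φ (g • c)} := by
  rw [MulAction.isBlock_iff_smul_eq_of_mem]
  intro g a ha hga
  have hgc : ∀ g', φ (g' • g • c) = φ (g' • c) := fun g' => by
    rw [← hga g', smul_smul, smul_smul, ha]
  ext y
  simp only [Set.mem_smul_set_iff_inv_smul_mem, Set.mem_ofPred_eq]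
  constructor
  · intro H g'
    have := H (g' * g)
    rw [mul_smul, smul_inv_smul] at this
    rw [this, mul_smul, hgc]
  · intro H g'
    rw [← mul_smul, H, ← hgc (g' * g⁻¹), mul_smul, inv_smul_smul]

def IsMinRank (S : Subsemigroup (Function.End Ω)) (u : Ω → Ω) : Prop :=
  u ∈ S ∧ ∀ s ∈ S, rank u ≤ rank s

namespace IsMinRank

variable {S : Subsemigroup (Function.End Ω)} {u v : Ω → Ω}

lemma exists_of_nonempty (hS : (S : Set (Function.End Ω)).Nonempty) : ∃ u, IsMinRank S u := by
  obtain ⟨u, hu, hmin⟩ := Set.exists_min_image (S : Set (Function.End Ω)) rank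
    (Set.toFinite (α := Ω → Ω) _) hS
  exact ⟨u, hu, hmin⟩

lemma comp (hu : IsMinRank S u) (hv : v ∈ S) : IsMinRank S (u ∘ v) :=
  ⟨S.mul_mem hu.1 hv, fun s hs => (rank_comp_le u v).trans (hu.2 s hs)⟩

lemma rank_eq (hu : IsMinRank S u) (hv : IsMinRank S v) : rank u = rank v :=
  le_antisymm (hu.2 v hv.1) (hv.2 u hu.1)

lemma card_filter_image_eq_one (hu : IsMinRank S u) (hv : IsMinRank S v) (z : Ω) :
    #{x ∈ univ.image v | u x = u z} = 1 := by
  have hcomp : #((univ.image v).image u) = rank (u ∘ v) := by rw [image_image]; rfl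
  have himage : (univ.image v).image u = univ.image u :=
    eq_of_subset_of_card_le (image_subset_image (subset_univ _))
      (hcomp ▸ ((hu.comp hv.1).rank_eq hu).ge)
  have hinj : Set.InjOn u (univ.image v) := injOn_of_card_image_eq <| by
    rw [hcomp]; exact ((hu.comp hv.1).rank_eq hv)
  obtain ⟨x, hx, hxz⟩ := mem_image.mp (himage ▸ mem_image_of_mem u (mem_univ z))
  refine card_eq_one.mpr ⟨x, eq_singleton_iff_unique_mem.mpr ⟨mem_filter.mpr ⟨hx, hxz⟩, ?_⟩⟩
  intro y hy
  rw [mem_filter] at hy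
  exact hinj hy.1 hx (hy.2.trans hxz.symm)

variable {G : Type*} [Group G] [Fintype G] [MulAction G Ω] [MulAction.IsPretransitive G Ω]

lemma rank_mul_card_fiber (hGS : ∀ g : G, (fun x : Ω => g • x) ∈ S) (hu : IsMinRank S u)
    (z : Ω) : rank u * #{x | u x = u z} = Fintype.card Ω := by
  refine card_mul_card_eq_of_card_filter_smul_mem_eq_one (G := G) _ _ fun g => ?_
  simpa using (hu.comp (hGS g)).card_filter_image_eq_one hu (g⁻¹ • z)

lemma card_fiber_eq (hGS : ∀ g : G, (fun x : Ω => g • x) ∈ S) (hu : IsMinRank S u)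
    (hv : IsMinRank S v) (z w : Ω) : #{x | u x = u z} = #{x | v x = v w} := by
  have hrank : 0 < rank v := card_pos.mpr ⟨v w, mem_image_of_mem v (mem_univ w)⟩
  refine Nat.eq_of_mul_eq_mul_left hrank ?_
  rw [← hu.rank_eq hv, hu.rank_mul_card_fiber hGS, hu.rank_eq hv, hv.rank_mul_card_fiber hGS]

end IsMinRank

theorem stmt11 (G : Subgroup (Equiv.Perm Ω)) (hG : IsPrimitive G) (f : Ω → Ω)
    (hf : ∃ k : ℕ, 2 ≤ k ∧ KernelTypeK f k) : Synchronizes G f := by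
  classical
  have := hG.1
  obtain ⟨k, hk, A, rfl, hAconst, hAker⟩ := hf
  obtain ⟨a, ha, b, hb, hab⟩ := one_lt_card.mp hk
  set S := genSemigroup G f
  have hfS : f ∈ S := Subsemigroup.subset_closure (Or.inr rfl)
  have hGS : ∀ g : G, (fun x : Ω => g • x) ∈ S :=
    fun g => Subsemigroup.subset_closure (Or.inl ⟨g, g.2, rfl⟩)
  obtain ⟨h, hh⟩ := IsMinRank.exists_of_nonempty ⟨f, hfS⟩
  obtain ⟨m, hm⟩ : ∃ m, m ∉ Set.range f := by
    by_contra! hsurj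
    exact hab (Finite.injective_iff_surjective.mpr hsurj (hAconst a ha b hb))
  have hkey : ∀ g : G, h (g • m) = h (g • f a) := by
    intro g
    have hhg := hh.comp (hGS g)
    set F : Finset Ω := {y | h (g • y) = h (g • f a)} with hF
    have hinj : ∀ x y, f x = f y → f x ∉ F → x = y := by
      intro x y hxy hx
      rcases hAker x y hxy with rfl | ⟨hxA, -⟩
      · rfl
      · simp [hF, hAconst x hxA a ha] at hx
    have hcard : #{x | f x ∈ F} = #F := by
      simpa [hF] using (hhg.comp hfS).card_fiber_eq hGS hhg a (f a)
    simpa [hF] using compl_range_subset_of_card_preimage_eq hinj hcard hm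
  by_contra hsync
  rcases hG.2 _ (isBlock_setOf_forall_smul_eq h (f a)) with hsub | huniv
  · exact hm ⟨a, (hsub hkey fun _ => rfl).symm⟩
  · refine hsync ⟨h, hh.1, h (f a), fun y => ?_⟩
    simpa using Set.eq_univ_iff_forall.mp huniv y 1
end

section
/- Let G be a primitive permutation group of degree n > 2. Then G synchronizes every non-uniform map of rank 3 and every non-uniform map of rank 4. -/
open Finset

variable {Ω : Type*} [Fintype Ω] [DecidableEq Ω]

/-!
Let `s` have minimal rank `r` in `S = ⟨G, f⟩`; if `G` does not synchronize `f`, then `r ≥ 2`.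
Every element of `S` is injective on `image s`, so every `G`-translate of `image s` is a
transversal of the kernel of `s`, and double counting over the transitive group `G` shows that all
kernel classes of `s` have `n / r` elements; hence the non-uniform map `f` has rank `> r`.

The case `r = 2` is impossible: `G` acts on the graph `Gr S`, which is therefore connected by
primitivity, and `s` is a proper 2-colouring of it, so the kernel of `s` is a nontrivial
`G`-invariant partition. Nor can `S` contain a map `t` of rank `r + 1`: each `s ∘ g` identifies
exactly one pair of points of `image t`, class sizes force this pair to be the same for all `g`,
and "`s ∘ g` identifies `x` and `y` for every `g`" is then a nontrivial `G`-invariant equivalence.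
As `rank f ∈ {3, 4}`, one of these two cases would have to occur.
-/

def kernelClass (t : Ω → Ω) (x : Ω) : Finset Ω := {z | t z = t x}

lemma rank_comp (t s : Ω → Ω) : rank (t ∘ s) = #((univ.image s).image t) := by
  rw [rank, image_image]

lemma rank_comp_le_left (t s : Ω → Ω) : rank (t ∘ s) ≤ rank t :=
  card_le_card (image_subset_iff.mpr fun x _ => mem_image_of_mem t (mem_univ (s x)))

lemma one_lt_rank_iff {t : Ω → Ω} : 1 < rank t ↔ ∃ x y, t x ≠ t y := by
  simp [rank, one_lt_card_iff]

lemma rank_eq_card_iff {t : Ω → Ω} : rank t = Fintype.card Ω ↔ Function.Injective t := by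
  rw [rank, ← card_univ, card_image_iff, coe_univ, Set.injOn_univ]

lemma rank_mul_card_kernelClass {t : Ω → Ω} {m : ℕ} (h : ∀ z, #(kernelClass t z) = m) :
    rank t * m = Fintype.card Ω := by
  rw [← card_univ, card_eq_sum_card_image t univ, rank, ← smul_eq_mul, ← sum_const]
  refine sum_congr rfl fun x hx => ?_
  obtain ⟨z, -, rfl⟩ := mem_image.mp hx
  exact (h z).symm

lemma card_kernelClass_pos (t : Ω → Ω) (z : Ω) : 0 < #(kernelClass t z) :=
  card_pos.mpr ⟨z, by simp [kernelClass]⟩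

lemma kernelClass_comp_of_forall {p t : Ω → Ω} {z : Ω} (h : ∀ w, p (t w) = p (t z) → t w = t z) :
    kernelClass (p ∘ t) z = kernelClass t z := by
  ext w
  simp only [kernelClass, mem_filter, mem_univ, true_and, Function.comp_apply]
  exact ⟨h w, congrArg p⟩

lemma card_kernelClass_add_card_le {p t : Ω → Ω} {z w : Ω} (hne : t w ≠ t z)
    (he : p (t w) = p (t z)) :
    #(kernelClass t z) + #(kernelClass t w) ≤ #(kernelClass (p ∘ t) z) := by
  rw [← card_union_of_disjoint]
  · refine card_le_card fun v hv => ?_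
    simp only [kernelClass, mem_union, mem_filter, mem_univ, true_and, Function.comp_apply] at hv ⊢
    rcases hv with hv | hv <;> rw [hv]
    exact he
  · refine disjoint_left.mpr fun v hvz hvw => hne ?_
    simp only [kernelClass, mem_filter, mem_univ, true_and] at hvz hvw
    rw [← hvz, hvw]

lemma Finset.eq_or_eq_of_card_image_add_one {α β : Type*} [DecidableEq α] [DecidableEq β]
    {A : Finset α} {c : α → β} (hA : #(A.image c) + 1 = #A) {a b u v : α} (ha : a ∈ A)
    (hb : b ∈ A) (hab : a ≠ b) (hcab : c a = c b) (hu : u ∈ A) (hv : v ∈ A) (huv : u ≠ v)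
    (hcuv : c u = c v) : u = a ∨ u = b := by
  have hinj : Set.InjOn c (A.erase b) := by
    have himg : (A.erase b).image c = A.image c := by
      refine (image_subset_image (erase_subset b A)).antisymm fun y hy => ?_
      obtain ⟨x, hx, rfl⟩ := mem_image.mp hy
      by_cases hxb : x = b
      · exact mem_image.mpr ⟨a, mem_erase.mpr ⟨hab, ha⟩, hxb ▸ hcab⟩
      · exact mem_image_of_mem c (mem_erase.mpr ⟨hxb, hx⟩)
    refine card_image_iff.mp (le_antisymm card_image_le ?_)
    rw [himg, card_erase_of_mem hb]
    omega
  by_contra h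
  push Not at h
  by_cases hvb : v = b
  · subst hvb
    exact h.1 (hinj (mem_erase.mpr ⟨h.2, hu⟩) (mem_erase.mpr ⟨hab, ha⟩) (hcuv.trans hcab.symm))
  · exact huv (hinj (mem_erase.mpr ⟨h.2, hu⟩) (mem_erase.mpr ⟨hvb, hv⟩) hcuv)

section GroupAction

variable {H α : Type*} [Group H] [MulAction H α]

open scoped Pointwise in
lemma MulAction.eq_or_forall_of_equivalence
    (hblocks : ∀ B : Set α, MulAction.IsBlock H B → B.Subsingleton ∨ B = Set.univ)
    {R : α → α → Prop} (hR : Equivalence R) (hinv : ∀ (g : H) ⦃x y⦄, R x y → R (g • x) (g • y)) :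
    (∀ ⦃x y⦄, R x y → x = y) ∨ ∀ x y, R x y := by
  have hclass : ∀ (g : H) a, g • {y | R a y} = {y | R (g • a) y} := fun g a => by
    ext y
    rw [Set.mem_smul_set_iff_inv_smul_mem, Set.mem_ofPred_eq, Set.mem_ofPred_eq]
    exact ⟨fun h => by simpa using hinv g h, fun h => by simpa using hinv g⁻¹ h⟩
  have hblock : ∀ a, MulAction.IsBlock H {y | R a y} := fun a => by
    refine MulAction.isBlock_iff_smul_eq_of_mem.mpr fun g b hb hgb => ?_
    rw [hclass]
    ext y
    exact ⟨hR.trans (hR.trans hgb (hR.symm (hinv g hb))),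
      hR.trans (hR.trans (hinv g hb) (hR.symm hgb))⟩
  by_cases h : ∃ a, {y | R a y} = Set.univ
  · obtain ⟨a, ha⟩ := h
    have hall : ∀ y, R a y := fun y => show y ∈ {y | R a y} from ha ▸ Set.mem_univ y
    exact Or.inr fun x y => hR.trans (hR.symm (hall x)) (hall y)
  · push Not at h
    exact Or.inl fun x y hxy => ((hblocks _ (hblock x)).resolve_right (h x)) (hR.refl x) hxy

lemma MulAction.card_filter_smul_mem_mul_card [Fintype H] [Fintype α] [DecidableEq α]
    [MulAction.IsPretransitive H α] (a : α) (F : Finset α) :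
    #{h : H | h • a ∈ F} * Fintype.card α = #F * Fintype.card H := by
  have hconst : ∀ b : α, #{h : H | h • b ∈ F} = #{h : H | h • a ∈ F} := by
    intro b
    obtain ⟨h₀, rfl⟩ := MulAction.exists_smul_eq H a b
    exact card_equiv (Equiv.mulRight h₀) fun h => by simp [mul_smul]
  have hperm : ∀ h : H, #{b : α | h • b ∈ F} = #F := fun h =>
    card_equiv (MulAction.toPerm h) fun b => by simp
  calc #{h : H | h • a ∈ F} * Fintype.card α
      = ∑ b : α, #{h : H | h • b ∈ F} := by simp [hconst, mul_comm]
    _ = ∑ h : H, #{b : α | h • b ∈ F} :=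
      (sum_card_bipartiteAbove_eq_sum_card_bipartiteBelow (r := fun b (h : H) => h • b ∈ F))
    _ = #F * Fintype.card H := by simp [hperm, mul_comm]

end GroupAction

lemma eq_iff_ne_of_two_valued {V δ : Type*} {d : V → δ} {a b : δ} (hd : ∀ v, d v = a ∨ d v = b)
    {u v w : V} (huv : d u ≠ d v) : d u = d w ↔ d v ≠ d w := by
  rcases hd u with hu | hu <;> rcases hd v with hv | hv <;> rcases hd w with hw | hw <;>
    simp_all [eq_comm]

lemma SimpleGraph.Reachable.eq_iff_eq_of_two_colorings {V β γ : Type*} {Γ : SimpleGraph V}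
    {c : V → β} {c' : V → γ} {a b : β} {a' b' : γ} (hc : ∀ v, c v = a ∨ c v = b)
    (hc' : ∀ v, c' v = a' ∨ c' v = b') (hadj : ∀ ⦃x y⦄, Γ.Adj x y → c x ≠ c y)
    (hadj' : ∀ ⦃x y⦄, Γ.Adj x y → c' x ≠ c' y) {x y : V} (hxy : Γ.Reachable x y) :
    c x = c y ↔ c' x = c' y := by
  obtain ⟨p⟩ := hxy
  induction p with
  | nil => simp
  | cons h _ ih =>
    rw [eq_iff_ne_of_two_valued hc (hadj h), eq_iff_ne_of_two_valued hc' (hadj' h)]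
    exact not_congr ih

def IsMinimalRank (S : Subsemigroup (Function.End Ω)) (s : Ω → Ω) : Prop :=
  s ∈ S ∧ ∀ t ∈ S, rank s ≤ rank t

lemma exists_isMinimalRank {S : Subsemigroup (Function.End Ω)} {f : Ω → Ω} (hf : f ∈ S) :
    ∃ s, IsMinimalRank S s := by
  obtain ⟨s, hs, hmin⟩ := Set.exists_min_image (S : Set (Function.End Ω)) rank
    ((Set.finite_univ (α := Ω → Ω)).subset (Set.subset_univ _)) ⟨f, hf⟩
  exact ⟨s, hs, hmin⟩

namespace IsMinimalRank

variable {S : Subsemigroup (Function.End Ω)} {s t : Ω → Ω}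

lemma rank_comp_right (hs : IsMinimalRank S s) (ht : t ∈ S) : rank (s ∘ t) = rank s :=
  le_antisymm (rank_comp_le_left s t) (hs.2 _ (mul_mem hs.1 ht))

lemma comp_right (hs : IsMinimalRank S s) (ht : t ∈ S) : IsMinimalRank S (s ∘ t) :=
  ⟨mul_mem hs.1 ht, fun u hu => (hs.rank_comp_right ht).trans_le (hs.2 u hu)⟩

lemma injOn (hs : IsMinimalRank S s) (ht : t ∈ S) : Set.InjOn t (univ.image s) :=
  card_image_iff.mp (le_antisymm card_image_le (rank_comp t s ▸ hs.2 _ (mul_mem ht hs.1)))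

variable {G : Subgroup (Equiv.Perm Ω)}

lemma card_filter_smul_eq_one (hGS : ∀ g : G, ⇑(g : Equiv.Perm Ω) ∈ S)
    (hs : IsMinimalRank S s) (g : G) (x : Ω) : #{w ∈ univ.image s | s (g • w) = s x} = 1 := by
  have hinj : Set.InjOn (s ∘ ⇑(g : Equiv.Perm Ω)) (univ.image s) :=
    hs.injOn (mul_mem hs.1 (hGS g))
  have himg : (univ.image s).image (s ∘ ⇑(g : Equiv.Perm Ω)) = univ.image s :=
    eq_of_subset_of_card_le (image_subset_iff.mpr fun w _ => mem_image_of_mem s (mem_univ _))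
      (card_image_of_injOn hinj).ge
  obtain ⟨w, hw, hwx⟩ := mem_image.mp (himg ▸ mem_image_of_mem s (mem_univ x))
  refine card_eq_one.mpr ⟨w, ext fun v => ?_⟩
  rw [mem_filter, mem_singleton]
  exact ⟨fun ⟨hv, hvx⟩ => hinj hv hw (hvx.trans hwx.symm), fun h => h ▸ ⟨hw, hwx⟩⟩

theorem card_kernelClass_mul_rank (htrans : MulAction.IsPretransitive G Ω)
    (hGS : ∀ g : G, ⇑(g : Equiv.Perm Ω) ∈ S) (hs : IsMinimalRank S s) (x : Ω) :
    #(kernelClass s x) * rank s = Fintype.card Ω := by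
  let : Fintype G := Fintype.ofFinite G
  set K := univ.image s
  set F := kernelClass s x
  have hG : 0 < Fintype.card G := Fintype.card_pos
  have hincidence : ∀ g : G, #{w ∈ K | g • w ∈ F} = 1 := fun g => by
    simpa [F, kernelClass] using hs.card_filter_smul_eq_one hGS g x
  refine Nat.eq_of_mul_eq_mul_right hG ?_
  calc #F * rank s * Fintype.card G
      = ∑ w ∈ K, #{g : G | g • w ∈ F} * Fintype.card Ω := by
        simp only [MulAction.card_filter_smul_mem_mul_card, sum_const, smul_eq_mul, rank]
        ring
    _ = (∑ g : G, #{w ∈ K | g • w ∈ F}) * Fintype.card Ω := by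
        rw [← sum_mul]
        exact congrArg (· * _) (sum_card_bipartiteAbove_eq_sum_card_bipartiteBelow
          (r := fun (g : G) w => g • w ∈ F)).symm
    _ = Fintype.card Ω * Fintype.card G := by simp [hincidence, mul_comm]

lemma rank_lt_of_nonuniform {f : Ω → Ω} (htrans : MulAction.IsPretransitive G Ω)
    (hGS : ∀ g : G, ⇑(g : Equiv.Perm Ω) ∈ S) (hs : IsMinimalRank S s) (hf : f ∈ S)
    (hnonuniform : ∃ x y, #(kernelClass f x) ≠ #(kernelClass f y)) : rank s < rank f := by
  refine (hs.2 f hf).lt_of_ne fun he => ?_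
  obtain ⟨x, y, hxy⟩ := hnonuniform
  have hunif := card_kernelClass_mul_rank htrans hGS ⟨hf, he ▸ hs.2⟩
  have hr : 0 < rank f := card_pos.mpr ⟨f x, mem_image_of_mem f (mem_univ x)⟩
  exact hxy (Nat.eq_of_mul_eq_mul_right hr ((hunif x).trans (hunif y).symm))

lemma gr_adj_of_mem_image (hs : IsMinimalRank S s) {a b : Ω} (ha : a ∈ univ.image s)
    (hb : b ∈ univ.image s) (hab : a ≠ b) : (Gr (S : Set (Function.End Ω))).Adj a b :=
  ⟨hab, fun _ ht he => hab (hs.injOn ht ha hb he)⟩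

theorem rank_ne_two (hn : 2 < Fintype.card Ω) (hG : IsPrimitive G)
    (hGS : ∀ g : G, ⇑(g : Equiv.Perm Ω) ∈ S) (hs : IsMinimalRank S s) : rank s ≠ 2 := by
  intro h2
  obtain ⟨a, b, hab, himg⟩ := card_eq_two.mp h2
  have hval : ∀ v, s v = a ∨ s v = b := fun v => by
    simpa [himg] using mem_image_of_mem s (mem_univ v)
  set Γ := Gr (S : Set (Function.End Ω))
  have hsmul : ∀ (g : G) ⦃x y⦄, Γ.Adj x y → Γ.Adj (g • x) (g • y) := fun g _ _ h =>
    ⟨fun he => h.1 ((g : Equiv.Perm Ω).injective he), fun _ ht => h.2 _ (mul_mem ht (hGS g))⟩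
  have hconn : ∀ x y, Γ.Reachable x y := by
    refine (MulAction.eq_or_forall_of_equivalence hG.2 Γ.reachable_is_equivalence
      fun g x y h => h.map ⟨(g • ·), fun h => hsmul g h⟩).resolve_left fun hdisc => hab (hdisc ?_)
    exact (hs.gr_adj_of_mem_image (by simp [himg]) (by simp [himg]) hab).reachable
  have hproper : ∀ t ∈ S, ∀ ⦃x y⦄, Γ.Adj x y → t x ≠ t y := fun t ht _ _ h => h.2 t ht
  -- `s` and `s ∘ g` are proper 2-colourings of the connected graph `Γ`: they agree up to a swap
  have hker : ∀ (g : G) ⦃x y⦄, s x = s y → s (g • x) = s (g • y) := fun g x y =>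
    ((hconn x y).eq_iff_eq_of_two_colorings hval (fun v => hval (g • v)) (hproper s hs.1)
      (hproper _ (mul_mem hs.1 (hGS g)))).mp
  rcases MulAction.eq_or_forall_of_equivalence (R := fun x y => s x = s y) hG.2
    ⟨fun _ => rfl, Eq.symm, Eq.trans⟩ hker with hinj | hconst
  · have := rank_eq_card_iff.mpr fun x y => @hinj x y
    omega
  · obtain ⟨x, y, hxy⟩ := one_lt_rank_iff.mp (h2 ▸ one_lt_two)
    exact hxy (hconst x y)

lemma card_kernelClass_comp_smul (htrans : MulAction.IsPretransitive G Ω)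
    (hGS : ∀ g : G, ⇑(g : Equiv.Perm Ω) ∈ S) (hs : IsMinimalRank S s) (ht : t ∈ S) (g : G)
    (z : Ω) : #(kernelClass (s ∘ ⇑(g : Equiv.Perm Ω) ∘ t) z) * rank s = Fintype.card Ω := by
  rw [← hs.rank_comp_right (mul_mem (hGS g) ht)]
  exact (hs.comp_right (mul_mem (hGS g) ht)).card_kernelClass_mul_rank htrans hGS z

lemma card_kernelClass_mul_rank_of_unmerged (htrans : MulAction.IsPretransitive G Ω)
    (hGS : ∀ g : G, ⇑(g : Equiv.Perm Ω) ∈ S) (hs : IsMinimalRank S s) (ht : t ∈ S) {g : G}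
    {z : Ω} (h : ∀ w, s (g • t w) = s (g • t z) → t w = t z) :
    #(kernelClass t z) * rank s = Fintype.card Ω := by
  rw [← kernelClass_comp_of_forall (p := s ∘ ⇑(g : Equiv.Perm Ω)) h]
  exact card_kernelClass_comp_smul htrans hGS hs ht g z

/-- A point of `image t` that some `g` keeps apart from all others carries a full kernel class
of `s ∘ g ∘ t`, so no `g'` can identify it with another point. -/
lemma not_merged_of_unmerged (htrans : MulAction.IsPretransitive G Ω)
    (hGS : ∀ g : G, ⇑(g : Equiv.Perm Ω) ∈ S) (hs : IsMinimalRank S s) (ht : t ∈ S) {g g' : G}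
    {z w : Ω} (h : ∀ w, s (g • t w) = s (g • t z) → t w = t z) (hne : t w ≠ t z) :
    s (g' • t w) ≠ s (g' • t z) := by
  intro he
  have hlone := card_kernelClass_mul_rank_of_unmerged htrans hGS hs ht h
  have hpair := (Nat.mul_le_mul_right (rank s) (card_kernelClass_add_card_le
    (p := s ∘ ⇑(g' : Equiv.Perm Ω)) hne he)).trans_eq
    (card_kernelClass_comp_smul htrans hGS hs ht g' z)
  have hw := card_kernelClass_pos t w
  have hr : 0 < rank s := card_pos.mpr ⟨s z, mem_image_of_mem s (mem_univ z)⟩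
  nlinarith

lemma rank_eq_of_forall_unmerged [Nonempty Ω] (htrans : MulAction.IsPretransitive G Ω)
    (hGS : ∀ g : G, ⇑(g : Equiv.Perm Ω) ∈ S) (hs : IsMinimalRank S s) (ht : t ∈ S)
    (h : ∀ z, ∃ g : G, ∀ w, s (g • t w) = s (g • t z) → t w = t z) : rank t = rank s := by
  choose g hg using h
  have hlone z := card_kernelClass_mul_rank_of_unmerged htrans hGS hs ht (hg z)
  obtain ⟨z₀⟩ := ‹Nonempty Ω›
  have hr : 0 < rank s := card_pos.mpr ⟨s z₀, mem_image_of_mem s (mem_univ z₀)⟩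
  have hm : ∀ z, #(kernelClass t z) = #(kernelClass t z₀) := fun z =>
    Nat.eq_of_mul_eq_mul_right hr ((hlone z).trans (hlone z₀).symm)
  refine Nat.eq_of_mul_eq_mul_right (card_kernelClass_pos t z₀) ?_
  rw [rank_mul_card_kernelClass hm, ← hlone z₀, mul_comm]

lemma card_image_smul_image_add_one (hGS : ∀ g : G, ⇑(g : Equiv.Perm Ω) ∈ S)
    (hs : IsMinimalRank S s) (ht : t ∈ S) (hrt : rank t = rank s + 1) (g : G) :
    #((univ.image t).image fun x => s (g • x)) + 1 = #(univ.image t) := by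
  rw [image_image]
  change rank (s ∘ ⇑(g : Equiv.Perm Ω) ∘ t) + 1 = rank t
  rw [hs.rank_comp_right (t := ⇑(g : Equiv.Perm Ω) ∘ t) (mul_mem (hGS g) ht), hrt]

/-- Each `s ∘ g` identifies exactly one pair of points of `image t`; if `t z₀` is in that pair
for every `g`, its partner in the pair does not depend on `g`. -/
lemma exists_merged_by_all (htrans : MulAction.IsPretransitive G Ω)
    (hGS : ∀ g : G, ⇑(g : Equiv.Perm Ω) ∈ S) (hs : IsMinimalRank S s) (ht : t ∈ S)
    (hrt : rank t = rank s + 1) {z₀ : Ω}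
    (h : ∀ g : G, ∃ w, s (g • t w) = s (g • t z₀) ∧ t w ≠ t z₀) :
    ∃ w₀, t w₀ ≠ t z₀ ∧ ∀ g : G, s (g • t w₀) = s (g • t z₀) := by
  obtain ⟨w₀, hw₀, hne₀⟩ := h 1
  refine ⟨w₀, hne₀, fun g => ?_⟩
  obtain ⟨w, hw, hne⟩ := h g
  have hmerged : ¬ ∀ w', s (g • t w') = s (g • t w₀) → t w' = t w₀ := fun hl =>
    not_merged_of_unmerged htrans hGS hs ht hl (Ne.symm hne₀) hw₀.symm
  push Not at hmerged
  obtain ⟨w', hw', hne'⟩ := hmerged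
  have hmem : ∀ x, t x ∈ univ.image t := fun x => mem_image_of_mem t (mem_univ x)
  rcases Finset.eq_or_eq_of_card_image_add_one (card_image_smul_image_add_one hGS hs ht hrt g)
    (hmem z₀) (hmem w) (Ne.symm hne) hw.symm (hmem w₀) (hmem w') (Ne.symm hne') hw'.symm with
    h | h
  · exact absurd h hne₀
  · rw [h, hw]

theorem rank_ne_rank_add_one (hG : IsPrimitive G) (hGS : ∀ g : G, ⇑(g : Equiv.Perm Ω) ∈ S)
    (hs : IsMinimalRank S s) (hs1 : 1 < rank s) (ht : t ∈ S) : rank t ≠ rank s + 1 := by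
  intro hrt
  obtain ⟨x, y, hxy⟩ := one_lt_rank_iff.mp hs1
  have : Nonempty Ω := ⟨x⟩
  by_cases hcase : ∀ z, ∃ g : G, ∀ w, s (g • t w) = s (g • t z) → t w = t z
  · have := rank_eq_of_forall_unmerged hG.1 hGS hs ht hcase
    omega
  push Not at hcase
  obtain ⟨z₀, hz₀⟩ := hcase
  obtain ⟨w₀, hne₀, hall⟩ := exists_merged_by_all hG.1 hGS hs ht hrt hz₀
  rcases MulAction.eq_or_forall_of_equivalence (R := fun x y => ∀ g : G, s (g • x) = s (g • y))
    hG.2 ⟨fun _ _ => rfl, fun h g => (h g).symm, fun h₁ h₂ g => (h₁ g).trans (h₂ g)⟩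
    (fun g _ _ h g' => by simpa only [smul_smul] using h (g' * g)) with hdisc | huniv
  · exact hne₀ (hdisc hall)
  · simpa using hxy (huniv x y 1)

end IsMinimalRank

lemma one_lt_rank_of_not_synchronizes [Nonempty Ω] {G : Subgroup (Equiv.Perm Ω)} {f t : Ω → Ω}
    (hsync : ¬ Synchronizes G f) (ht : t ∈ genSemigroup G f) : 1 < rank t := by
  by_contra h
  refine hsync ⟨t, ht, t (Classical.arbitrary Ω), fun x => ?_⟩
  by_contra hx
  exact h (one_lt_rank_iff.mpr ⟨_, _, hx⟩)

theorem stmt18 (hn : 2 < Fintype.card Ω) (G : Subgroup (Equiv.Perm Ω))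
    (hG : IsPrimitive G) (f : Ω → Ω)
    (hnonuniform : ∃ x y : Ω,
      (Finset.univ.filter (fun z => f z = f x)).card ≠
        (Finset.univ.filter (fun z => f z = f y)).card)
    (hf : rank f = 3 ∨ rank f = 4) : Synchronizes G f := by
  by_contra hsync
  have : Nonempty Ω := Fintype.card_pos_iff.mp (by omega)
  have hfS : f ∈ genSemigroup G f := Subsemigroup.subset_closure (Set.mem_union_right _ rfl)
  have hGS : ∀ g : G, ⇑(g : Equiv.Perm Ω) ∈ genSemigroup G f := fun g =>
    Subsemigroup.subset_closure (Set.mem_union_left _ ⟨g, g.2, rfl⟩)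
  obtain ⟨s, hs⟩ := exists_isMinimalRank hfS
  have hs1 := one_lt_rank_of_not_synchronizes hsync hs.1
  have hsf := hs.rank_lt_of_nonuniform hG.1 hGS hfS hnonuniform
  have hs2 := hs.rank_ne_two hn hG hGS
  have hfs := hs.rank_ne_rank_add_one hG hGS hs1 hfS
  omega
end
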